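/- arXiv:2303.00828 — 6 statements merged into one kernel-verified Lean document; each statement's English description precedes it below -/
import Mathlib

section
/- Let p be a prime, n ≥ 3, A ⊆ F_p^n a sum-free set, and u ∈ F_p^n \ {0} such that {x·u : x ∈ I_p} ⊆ A, where I_p = {m_p, ..., 2m_p − 1} with m_p = (p+1)/3 (for p ≡ 2 mod 3). Then there exist two distinct subspaces W₁, W₂ < F_p^n of codimension 1, each containing u, such that |Wᵢ ∩ A| ≥ |A|/p for i ∈ {1, 2}. -/
/-!
Count incidences between `A` and the hyperplanes through `L = 𝔽_p u` with multiplicity: as pairs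
`(x, φ)` with `x ∈ A` and `φ ≠ 0` a functional vanishing on `L` and at `x`. Cauchy–Davenport, applied
to sum-freeness against `I_p u ⊆ A`, shows that every line parallel to `L` meets `A` in at most
`m_p` points and `L` itself in exactly `m_p`; so a hyperplane through `L` contains at most
`m_p p^(n-2)` points of `A`, while double counting gives the exact number of incidences. If at most
one hyperplane through `L` (that is, at most `p - 1` functionals) carried a `1/p` share of `A`, the
resulting upper bound would fall below that exact number, the gap being proportional to
`p^(n-2) - 1 > 0`.
-/

open Pointwise Finset Module Submodule

open scoped Classical

section Hyperplanes

variable {K V : Type*} [Field K] [AddCommGroup V] [Module K V] [FiniteDimensional K V]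

lemma Module.Dual.finrank_ker_of_ne_zero {φ : Dual K V} (hφ : φ ≠ 0) :
    finrank K (LinearMap.ker φ) = finrank K V - 1 := by
  have := Dual.finrank_ker_add_one_of_ne_zero hφ
  omega

lemma finrank_map_mkQ_add_finrank {L H : Submodule K V} (h : L ≤ H) :
    finrank K (H.map L.mkQ) + finrank K L = finrank K H := by
  have := LinearMap.finrank_range_add_finrank_ker (L.mkQ ∘ₗ H.subtype)
  rwa [LinearMap.range_comp, range_subtype, LinearMap.ker_comp, ker_mkQ,
    (comapSubtypeEquivOfLe h).finrank_eq] at this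

variable [Finite K]

instance Module.Dual.finite : Finite (Dual K V) := Module.finite_of_finite K

/-- Every hyperplane containing `W` is the kernel of exactly `|K| - 1` of these functionals. -/
noncomputable def nonzeroAnnihilators (W : Submodule K V) : Finset (Dual K V) :=
  ((W.dualAnnihilator : Set (Dual K V)) \ {0}).toFinite.toFinset

lemma mem_nonzeroAnnihilators {W : Submodule K V} {φ : Dual K V} :
    φ ∈ nonzeroAnnihilators W ↔ W ≤ LinearMap.ker φ ∧ φ ≠ 0 := by
  simp [nonzeroAnnihilators, mem_dualAnnihilator, SetLike.le_def]

lemma card_nonzeroAnnihilators (W : Submodule K V) :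
    #(nonzeroAnnihilators W) = Nat.card K ^ (finrank K V - finrank K W) - 1 := by
  rw [nonzeroAnnihilators, ← Set.ncard_eq_toFinset_card,
    Set.ncard_sdiff_singleton_of_mem (zero_mem _), ← Nat.card_coe_set_eq, SetLike.coe_sort_coe,
    natCard_eq_pow_finrank (K := K), ← Subspace.finrank_add_finrank_dualAnnihilator_eq W,
    Nat.add_sub_cancel_left]

lemma filter_nonzeroAnnihilators_apply_eq_zero (W : Submodule K V) (x : V) :
    {φ ∈ nonzeroAnnihilators W | φ x = 0} = nonzeroAnnihilators (W ⊔ K ∙ x) := by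
  ext φ
  simp only [mem_filter, mem_nonzeroAnnihilators, sup_le_iff, span_singleton_le_iff_mem,
    LinearMap.mem_ker]
  tauto

lemma sum_card_filter_apply_eq_zero (A : Finset V) (W : Submodule K V) :
    ∑ φ ∈ nonzeroAnnihilators W, #{x ∈ A | φ x = 0} =
      #{x ∈ A | x ∈ W} * (Nat.card K ^ (finrank K V - finrank K W) - 1) +
        #{x ∈ A | x ∉ W} * (Nat.card K ^ (finrank K V - finrank K W - 1) - 1) := by
  have hcount (x : V) : #{φ ∈ nonzeroAnnihilators W | φ x = 0} =
      if x ∈ W then Nat.card K ^ (finrank K V - finrank K W) - 1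
      else Nat.card K ^ (finrank K V - finrank K W - 1) - 1 := by
    rw [filter_nonzeroAnnihilators_apply_eq_zero, card_nonzeroAnnihilators]
    split_ifs with hx
    · rw [sup_eq_left.2 ((span_singleton_le_iff_mem _ _).2 hx)]
    · rw [finrank_sup_span_singleton hx, Nat.sub_add_eq]
  have hswap := sum_card_bipartiteAbove_eq_sum_card_bipartiteBelow (fun φ x => φ x = 0)
    (s := nonzeroAnnihilators W) (t := A)
  simp only [bipartiteAbove, bipartiteBelow] at hswap
  rw [hswap, ← sum_filter_add_sum_filter_not A (· ∈ W),
    sum_congr rfl fun x hx => (hcount x).trans (if_pos (mem_filter.1 hx).2),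
    sum_congr rfl fun x hx => (hcount x).trans (if_neg (mem_filter.1 hx).2),
    sum_const, sum_const, smul_eq_mul, smul_eq_mul]

lemma card_add_one_le_of_ker_eq {s : Finset (Dual K V)} (hs₀ : ∀ φ ∈ s, φ ≠ 0)
    (hs : ∀ φ ∈ s, ∀ ψ ∈ s, LinearMap.ker φ = LinearMap.ker ψ) : #s + 1 ≤ Nat.card K := by
  have hK : 1 < Nat.card K := Finite.one_lt_card
  rcases s.eq_empty_or_nonempty with rfl | ⟨φ₀, hφ₀⟩
  · simpa using hK.le
  have hsub : s ⊆ nonzeroAnnihilators (LinearMap.ker φ₀) := fun φ hφ =>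
    mem_nonzeroAnnihilators.2 ⟨(hs φ hφ φ₀ hφ₀).ge, hs₀ φ hφ⟩
  have hrank := Dual.finrank_ker_add_one_of_ne_zero (hs₀ φ₀ hφ₀)
  have hcard := card_le_card hsub
  rw [card_nonzeroAnnihilators, ← hrank, Nat.add_sub_cancel_left, pow_one] at hcard
  omega

lemma card_filter_mem_le_mul_pow (A : Finset V) {L H : Submodule K V} (h : L ≤ H) {m : ℕ}
    (hfib : ∀ y : V ⧸ L, #{x ∈ A | L.mkQ x = y} ≤ m) :
    #{x ∈ A | x ∈ H} ≤ m * Nat.card K ^ (finrank K H - finrank K L) := by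
  have : Finite (H.map L.mkQ) := Module.finite_of_finite K (M := H.map L.mkQ)
  have himage : ({x ∈ A | x ∈ H}.image L.mkQ : Set (V ⧸ L)) ⊆ H.map L.mkQ := by
    simp only [coe_image, coe_filter, Set.image_subset_iff]
    exact fun x hx => mem_map_of_mem hx.2
  calc #{x ∈ A | x ∈ H} ≤ m * #({x ∈ A | x ∈ H}.image L.mkQ) :=
        card_le_mul_card_image _ m fun y _ =>
          (card_le_card (filter_subset_filter _ (filter_subset _ _))).trans (hfib y)
    _ ≤ m * Nat.card (H.map L.mkQ) := by
        gcongr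
        rw [← Set.ncard_coe_finset, ← Nat.card_coe_set_eq]
        exact Set.ncard_le_ncard himage (Set.toFinite _)
    _ = m * Nat.card K ^ (finrank K H - finrank K L) := by
        rw [natCard_eq_pow_finrank (K := K), ← finrank_map_mkQ_add_finrank h, Nat.add_sub_cancel]

end Hyperplanes

lemma mul_sum_add_card_filter_not_le {ι : Type*} (s : Finset ι) (f : ι → ℕ) {q N B : ℕ}
    (hB : ∀ i ∈ s, f i ≤ B) :
    q * ∑ i ∈ s, f i + #{i ∈ s | ¬N ≤ q * f i} ≤
      #{i ∈ s | N ≤ q * f i} * (q * B) + #{i ∈ s | ¬N ≤ q * f i} * N := by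
  have hheavy : ∑ i ∈ s with N ≤ q * f i, q * f i ≤ #{i ∈ s | N ≤ q * f i} * (q * B) :=
    sum_le_card_nsmul _ _ _ fun i hi => Nat.mul_le_mul_left q (hB i (mem_filter.1 hi).1)
  have hlight : ∑ i ∈ s with ¬N ≤ q * f i, (q * f i + 1) ≤ #{i ∈ s | ¬N ≤ q * f i} * N :=
    sum_le_card_nsmul _ _ _ fun i hi => by have := (mem_filter.1 hi).2; omega
  rw [sum_add_distrib, sum_const, smul_eq_mul, mul_one] at hlight
  rw [mul_sum, ← sum_filter_add_sum_filter_not s (fun i => N ≤ q * f i)]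
  omega

/-- The incidence count with `k` heavy and `r` light functionals, `P = q^(n-2)` and `|A| = m + t`:
at `k = q - 1` the two sides differ by exactly `q (P - 1)`, and the left side grows with `k`. -/
lemma hyperplane_count_lt {q P m t k r : ℕ} (hP : 2 ≤ P) (hk : k + 1 ≤ q)
    (hkr : k + r + 1 = q * P) (hA : m + t ≤ m * (q * P)) :
    k * (q * (m * P)) + r * (m + t) < q * (m * (q * P - 1) + t * (P - 1)) + r := by
  zify [(by omega : 1 ≤ q * P), (by omega : 1 ≤ P)] at *
  have hr : (r : ℤ) = q * P - 1 - k := by linarith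
  rw [hr]
  nlinarith [mul_nonneg (by linarith : (0 : ℤ) ≤ q - 1 - k)
    (by linarith : (0 : ℤ) ≤ m * (q * P) - m - t)]

section Incidences

variable {K V : Type*} [Field K] [Finite K] [AddCommGroup V] [Module K V] [FiniteDimensional K V]

theorem card_le_card_filter_nonzeroAnnihilators (A : Finset V) {u : V} (hu : u ≠ 0)
    (hn : 3 ≤ finrank K V) {m : ℕ} (hfib : ∀ y : V ⧸ K ∙ u, #{x ∈ A | (K ∙ u).mkQ x = y} ≤ m)
    (hline : m ≤ #{x ∈ A | x ∈ K ∙ u}) :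
    Nat.card K ≤ #{φ ∈ nonzeroAnnihilators (K ∙ u) | #A ≤ Nat.card K * #{x ∈ A | φ x = 0}} := by
  set q := Nat.card K
  set n := finrank K V
  set G := nonzeroAnnihilators (K ∙ u)
  have hG (φ) (hφ : φ ∈ G) := mem_nonzeroAnnihilators.1 hφ
  have hL : finrank K (K ∙ u) = 1 := finrank_span_singleton hu
  have hline_eq : #{x ∈ A | x ∈ K ∙ u} = m :=
    le_antisymm (by simpa [Submodule.Quotient.mk_eq_zero] using hfib 0) hline
  have hhyperplane (φ) (hφ : φ ∈ G) : #{x ∈ A | φ x = 0} ≤ m * q ^ (n - 2) := by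
    simpa [Dual.finrank_ker_of_ne_zero (hG φ hφ).2, hL, Nat.sub_sub] using
      card_filter_mem_le_mul_pow A (hG φ hφ).1 hfib
  have htotal : #A ≤ m * q ^ (n - 1) := by
    simpa [hL] using card_filter_mem_le_mul_pow A le_top hfib
  have hcount := mul_sum_add_card_filter_not_le G (fun φ => #{x ∈ A | φ x = 0}) (q := q)
    (N := #A) hhyperplane
  beta_reduce at hcount
  set heavy := {φ ∈ G | #A ≤ q * #{x ∈ A | φ x = 0}}
  set light := {φ ∈ G | ¬#A ≤ q * #{x ∈ A | φ x = 0}}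
  by_contra! hheavy
  have hpow : q ^ (n - 1) = q * q ^ (n - 2) := by
    rw [← pow_succ']
    congr 1
    omega
  have hkr : #heavy + #light + 1 = q * q ^ (n - 2) := by
    have hG_card : #G = q ^ (n - 1) - 1 := by rw [card_nonzeroAnnihilators, hL]
    have : 1 ≤ q ^ (n - 1) := Nat.one_le_pow _ _ (by omega)
    rw [card_filter_add_card_filter_not, hG_card, ← hpow]
    omega
  have hA : m + #{x ∈ A | x ∉ K ∙ u} = #A := hline_eq ▸ card_filter_add_card_filter_not _
  have hsum : ∑ φ ∈ G, #{x ∈ A | φ x = 0} =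
      m * (q * q ^ (n - 2) - 1) + #{x ∈ A | x ∉ K ∙ u} * (q ^ (n - 2) - 1) := by
    rw [sum_card_filter_apply_eq_zero, hL, hline_eq, Nat.sub_sub, ← hpow]
  have hP : 2 ≤ q ^ (n - 2) := (le_self_pow₀ (by omega) (by omega)).trans' Finite.one_lt_card
  have key := hyperplane_count_lt hP hheavy hkr (by rw [hA, ← hpow]; exact htotal)
  rw [hA, ← hsum] at key
  exact key.not_ge hcount

theorem exists_ne_hyperplanes_card_le_mul (A : Finset V) {u : V} (hu : u ≠ 0)
    (hn : 3 ≤ finrank K V) {m : ℕ} (hfib : ∀ y : V ⧸ K ∙ u, #{x ∈ A | (K ∙ u).mkQ x = y} ≤ m)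
    (hline : m ≤ #{x ∈ A | x ∈ K ∙ u}) :
    ∃ H₁ H₂ : Submodule K V, H₁ ≠ H₂ ∧
      finrank K H₁ = finrank K V - 1 ∧ finrank K H₂ = finrank K V - 1 ∧ u ∈ H₁ ∧ u ∈ H₂ ∧
      #A ≤ Nat.card K * #{x ∈ A | x ∈ H₁} ∧ #A ≤ Nat.card K * #{x ∈ A | x ∈ H₂} := by
  have hcard := card_le_card_filter_nonzeroAnnihilators A hu hn hfib hline
  set heavy := {φ ∈ nonzeroAnnihilators (K ∙ u) | #A ≤ Nat.card K * #{x ∈ A | φ x = 0}}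
  have hmem {φ} (hφ : φ ∈ heavy) := mem_filter.1 hφ
  have hG {φ} (hφ : φ ∈ heavy) := mem_nonzeroAnnihilators.1 (hmem hφ).1
  obtain ⟨φ, hφ, ψ, hψ, hne⟩ :
      ∃ φ ∈ heavy, ∃ ψ ∈ heavy, LinearMap.ker φ ≠ LinearMap.ker ψ := by
    by_contra! h
    have := card_add_one_le_of_ker_eq (fun φ hφ => (hG hφ).2) h
    omega
  exact ⟨_, _, hne, Dual.finrank_ker_of_ne_zero (hG hφ).2, Dual.finrank_ker_of_ne_zero (hG hψ).2,
    (hG hφ).1 (mem_span_singleton_self u), (hG hψ).1 (mem_span_singleton_self u),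
    by simpa using (hmem hφ).2, by simpa using (hmem hψ).2⟩

end Incidences

lemma ZMod.two_mul_card_add_card_le_of_disjoint {p : ℕ} [Fact p.Prime] {B I : Finset (ZMod p)}
    (hI : I.Nonempty) (h : Disjoint (B + I) B) : 2 * #B + #I ≤ p + 1 := by
  have hIp := (card_le_univ I).trans (ZMod.card p).le
  rcases B.eq_empty_or_nonempty with rfl | hB
  · simp only [card_empty]
    omega
  have hunion : #(B + I) + #B ≤ p := by
    rw [← card_union_of_disjoint h]
    exact (card_le_univ _).trans (ZMod.card p).le
  have := ZMod.cauchy_davenport Fact.out hB hI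
  have := hB.card_pos
  omega

lemma ZMod.card_image_natCast_Ico {p a b : ℕ} (hb : b ≤ p) :
    #((Ico a b).image (Nat.cast : ℕ → ZMod p)) = b - a := by
  rw [card_image_of_injOn, Nat.card_Ico]
  intro i hi j hj hij
  simp only [coe_Ico, Set.mem_Ico] at hi hj
  rwa [ZMod.natCast_eq_natCast_iff', Nat.mod_eq_of_lt (by omega), Nat.mod_eq_of_lt (by omega)]
    at hij

lemma two_mul_card_filter_mkQ_eq_add_card_le {p : ℕ} [Fact p.Prime] {V : Type*} [AddCommGroup V]
    [Module (ZMod p) V] {A : Finset V} (hA : ∀ a ∈ A, ∀ b ∈ A, a + b ∉ A) {u : V}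
    {I : Finset (ZMod p)} (hI : I.Nonempty) (hIu : ∀ i ∈ I, i • u ∈ A) (y : V ⧸ ZMod p ∙ u) :
    2 * #{x ∈ A | (ZMod p ∙ u).mkQ x = y} + #I ≤ p + 1 := by
  obtain ⟨a, rfl⟩ := (ZMod p ∙ u).mkQ_surjective y
  set B : Finset (ZMod p) := {c | a + c • u ∈ A}
  have hfiber : {x ∈ A | (ZMod p ∙ u).mkQ x = (ZMod p ∙ u).mkQ a} ⊆
      B.image fun c => a + c • u := by
    intro x hx
    rw [mem_filter, mkQ_apply, mkQ_apply, Submodule.Quotient.eq, mem_span_singleton] at hx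
    obtain ⟨c, hc⟩ := hx.2
    have hx' : a + c • u = x := by rw [hc]; abel
    exact mem_image.2 ⟨c, by simpa [B, hx'] using hx.1, hx'⟩
  have hdisj : Disjoint (B + I) B := by
    rw [disjoint_left]
    rintro _ hx hbi
    obtain ⟨b, hb, i, hi, rfl⟩ := mem_add.1 hx
    simp only [B, mem_filter, mem_univ, true_and] at hb hbi
    exact hA _ hb _ (hIu i hi) (by rwa [add_smul, ← add_assoc] at hbi)
  calc 2 * #{x ∈ A | (ZMod p ∙ u).mkQ x = (ZMod p ∙ u).mkQ a} + #I ≤ 2 * #B + #I := by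
        gcongr
        exact (card_le_card hfiber).trans card_image_le
    _ ≤ p + 1 := ZMod.two_mul_card_add_card_le_of_disjoint hI hdisj

lemma card_le_card_filter_mem_span_singleton {K V : Type*} [Field K] [AddCommGroup V]
    [Module K V] {A : Finset V} {u : V} (hu : u ≠ 0) {I : Finset K} (hIu : ∀ i ∈ I, i • u ∈ A) :
    #I ≤ #{x ∈ A | x ∈ K ∙ u} := by
  rw [← card_image_of_injective I (smul_left_injective K hu)]
  refine card_le_card fun x hx => ?_
  obtain ⟨i, hi, rfl⟩ := mem_image.1 hx
  exact mem_filter.2 ⟨hIu i hi, smul_mem _ _ (mem_span_singleton_self u)⟩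

theorem stmt_1 (p : ℕ) [Fact p.Prime] (hp : p % 3 = 2) (n : ℕ) (hn : 3 ≤ n)
    (A : Set (Fin n → ZMod p))
    (hsf : ∀ a ∈ A, ∀ b ∈ A, a + b ∉ A)
    (u : Fin n → ZMod p) (hu : u ≠ 0)
    (hI : ∀ k : ℕ, (p + 1) / 3 ≤ k → k ≤ 2 * ((p + 1) / 3) - 1 → (k : ZMod p) • u ∈ A) :
    ∃ W₁ W₂ : Submodule (ZMod p) (Fin n → ZMod p), W₁ ≠ W₂ ∧
      Module.finrank (ZMod p) W₁ = n - 1 ∧ Module.finrank (ZMod p) W₂ = n - 1 ∧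
      u ∈ W₁ ∧ u ∈ W₂ ∧
      p * (A ∩ (W₁ : Set (Fin n → ZMod p))).ncard ≥ A.ncard ∧
      p * (A ∩ (W₂ : Set (Fin n → ZMod p))).ncard ≥ A.ncard := by
  obtain ⟨A, rfl⟩ := A.toFinite.exists_finset_coe
  set m := (p + 1) / 3
  set I : Finset (ZMod p) := (Ico m (2 * m)).image Nat.cast
  have hIcard : #I = m := by
    rw [ZMod.card_image_natCast_Ico (by omega)]
    omega
  have hIu : ∀ i ∈ I, i • u ∈ A := by
    simp only [I, mem_image, mem_Ico, forall_exists_index, and_imp]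
    rintro _ k hk₁ hk₂ rfl
    exact hI k hk₁ (by omega)
  have hfib (y) : #{x ∈ A | (ZMod p ∙ u).mkQ x = y} ≤ m := by
    have := two_mul_card_filter_mkQ_eq_add_card_le (by simpa using hsf)
      (card_pos.1 (by omega)) hIu y
    omega
  obtain ⟨W₁, W₂, hne, h₁, h₂, hu₁, hu₂, hA₁, hA₂⟩ := exists_ne_hyperplanes_card_le_mul A hu
    (by simpa using hn) hfib (hIcard ▸ card_le_card_filter_mem_span_singleton hu hIu)
  have hncard (W : Submodule (ZMod p) (Fin n → ZMod p)) :
      (↑A ∩ (W : Set (Fin n → ZMod p))).ncard = #{x ∈ A | x ∈ W} := by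
    rw [← Set.ncard_coe_finset, coe_filter]
    rfl
  rw [Nat.card_zmod] at hA₁ hA₂
  refine ⟨W₁, W₂, hne, by simpa using h₁, by simpa using h₂, hu₁, hu₂, ?_, ?_⟩ <;>
    rwa [ge_iff_le, hncard, Set.ncard_coe_finset]
end

section
/- If A ⊆ F_5^2 is sum-free with |A| ≥ 6, then A is normal, i.e., there is a 1-dimensional subspace V < F_5^2 and w ∈ F_5^2 \ V such that A ⊆ (2w + V) ∪ (3w + V). -/
/-!
The proof is an exhaustive search. A depth-first search through the 25 points of `F₅²` decides
for each point whether it belongs to the set, abandoning a branch as soon as the chosen set stops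
being sum-free, so its leaves are exactly the sum-free sets. Each leaf with at least six points
is checked to lie in one of the twelve maximal normal sets. Points are coded by `0, …, 24` and
sets by bitmasks, so that the kernel can run the search.
-/

open Pointwise

def maskOf : List ℕ → ℕ
  | [] => 0
  | n :: l => maskOf l ||| 2 ^ n

lemma testBit_lor_two_pow (m p n : ℕ) :
    (m ||| 2 ^ p).testBit n = true ↔ m.testBit n = true ∨ p = n := by
  simp [Nat.testBit_two_pow]

lemma testBit_maskOf (l : List ℕ) (n : ℕ) : (maskOf l).testBit n = true ↔ n ∈ l := by
  induction l with
  | nil => simp [maskOf]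
  | cons a l ih => rw [maskOf, testBit_lor_two_pow, ih, List.mem_cons, eq_comm, or_comm]

section Search

variable (op : ℕ → ℕ → ℕ) (k : ℕ) (covers : List ℕ)

def sumsWith (p : ℕ) : List ℕ → ℕ → ℕ
  | [], s => s
  | a :: S, s => sumsWith p S (s ||| 2 ^ op a p)

def IsSearchState (S : List ℕ) (m s : ℕ) : Prop :=
  m = maskOf S ∧ ∀ n, s.testBit n = true → ∃ a ∈ S, ∃ b ∈ S, op a b = n

def search : List ℕ → List ℕ → ℕ → ℕ → Bool
  | [], S, m, _ => decide (S.length < k) || covers.any fun N => m &&& N == m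
  | p :: l, S, m, s =>
    search l S m s &&
      (sumsWith op p (p :: S) s &&& (m ||| 2 ^ p) != 0 ||
        search l (p :: S) (m ||| 2 ^ p) (sumsWith op p (p :: S) s))

lemma testBit_sumsWith (p : ℕ) (S : List ℕ) (s n : ℕ) :
    (sumsWith op p S s).testBit n = true ↔ s.testBit n = true ∨ ∃ a ∈ S, op a p = n := by
  induction S generalizing s with
  | nil => simp [sumsWith]
  | cons a S ih =>
    simp only [sumsWith, ih, testBit_lor_two_pow, List.mem_cons, exists_eq_or_imp]
    tauto

lemma isSearchState_nil : IsSearchState op [] 0 0 :=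
  ⟨rfl, by simp⟩

lemma IsSearchState.cons {S : List ℕ} {m s : ℕ} (h : IsSearchState op S m s) (p : ℕ) :
    IsSearchState op (p :: S) (m ||| 2 ^ p) (sumsWith op p (p :: S) s) := by
  refine ⟨by rw [h.1, maskOf], fun n hn => ?_⟩
  rcases (testBit_sumsWith op p _ s n).1 hn with hs | ⟨a, ha, rfl⟩
  · obtain ⟨a, ha, b, hb, rfl⟩ := h.2 n hs
    exact ⟨a, List.mem_cons_of_mem p ha, b, List.mem_cons_of_mem p hb, rfl⟩
  · exact ⟨a, ha, p, List.mem_cons_self .., rfl⟩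

lemma IsSearchState.land_eq_zero {S : List ℕ} {m s : ℕ} (h : IsSearchState op S m s)
    (hS : ∀ a ∈ S, ∀ b ∈ S, op a b ∉ S) : s &&& m = 0 := by
  obtain ⟨rfl, hs⟩ := h
  refine Nat.eq_of_testBit_eq fun n => ?_
  rw [Nat.testBit_land, Nat.zero_testBit, Bool.and_eq_false_iff]
  by_contra! hn
  obtain ⟨a, ha, b, hb, rfl⟩ := hs _ (by simpa using hn.1)
  exact hS a ha b hb ((testBit_maskOf S _).1 (by simpa using hn.2))

theorem search_sound {l S : List ℕ} {m s : ℕ} (h : search op k covers l S m s = true)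
    (hst : IsSearchState op S m s) {T : Finset ℕ} (hT : ∀ a ∈ T, ∀ b ∈ T, op a b ∉ T)
    (hST : ∀ n ∈ S, n ∈ T) (hTl : ∀ n ∈ T, n ∈ S ∨ n ∈ l) (hk : k ≤ T.card) :
    ∃ N ∈ covers, ∀ n ∈ T, N.testBit n = true := by
  induction l generalizing S m s with
  | nil =>
    obtain ⟨rfl, -⟩ := hst
    have hTS : ∀ n ∈ T, n ∈ S := fun n hn => (hTl n hn).resolve_right List.not_mem_nil
    simp only [search, Bool.or_eq_true, decide_eq_true_eq, List.any_eq_true, beq_iff_eq] at h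
    rcases h with hlen | ⟨N, hN, hmN⟩
    · have := (Finset.card_le_card fun n hn => List.mem_toFinset.2 (hTS n hn)).trans
        S.toFinset_card_le
      omega
    · refine ⟨N, hN, fun n hn => ?_⟩
      have hbit := congrArg (Nat.testBit · n) hmN
      simp only [Nat.testBit_land, (testBit_maskOf S n).2 (hTS n hn), Bool.true_and] at hbit
      exact hbit
  | cons p l ih =>
    simp only [search, Bool.and_eq_true, Bool.or_eq_true, bne_iff_ne, ne_eq] at h
    obtain ⟨hskip, hadd⟩ := h
    by_cases hp : p ∈ T
    · have hpS : ∀ n ∈ p :: S, n ∈ T := by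
        simpa only [List.mem_cons, forall_eq_or_imp] using ⟨hp, hST⟩
      have hst' := hst.cons op p
      refine ih (hadd.resolve_left (not_not.2 (hst'.land_eq_zero op ?_))) hst' hpS ?_
      · exact fun a ha b hb hab => hT a (hpS a ha) b (hpS b hb) (hpS _ hab)
      · intro n hn
        rcases hTl n hn with hS | hl
        · exact Or.inl (List.mem_cons_of_mem p hS)
        · rcases List.mem_cons.1 hl with rfl | hl
          exacts [Or.inl (List.mem_cons_self ..), Or.inr hl]
    · refine ih hskip hst hST fun n hn => (hTl n hn).imp_right fun hl => ?_
      exact (List.mem_cons.1 hl).resolve_left (by rintro rfl; exact hp hn)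

end Search

abbrev Pt := ZMod 5 × ZMod 5

def code (p : Pt) : ℕ := 5 * p.1.val + p.2.val

def codeAdd (a b : ℕ) : ℕ := 5 * ((a / 5 + b / 5) % 5) + (a % 5 + b % 5) % 5

lemma code_injective : Function.Injective code := by
  unfold Function.Injective; decide

lemma codeAdd_code : ∀ x y : Pt, codeAdd (code x) (code y) = code (x + y) := by decide

lemma code_lt : ∀ x : Pt, code x < 25 := by decide

def IsNormal (A : Set Pt) : Prop :=
  ∃ V : Submodule (ZMod 5) Pt, Module.finrank (ZMod 5) V = 1 ∧
    ∃ w : Pt, w ∉ V ∧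
      A ⊆ ((2 : ZMod 5) • w +ᵥ (V : Set Pt)) ∪ ((3 : ZMod 5) • w +ᵥ (V : Set Pt))

def normalCosets (d w : Pt) : List Pt :=
  [(0 : ZMod 5), 1, 2, 3, 4].flatMap fun t =>
    [(2 : ZMod 5) • w + t • d, (3 : ZMod 5) • w + t • d]

lemma isNormal_of_forall_mem_normalCosets {A : Set Pt} {d w : Pt} (hd : d ≠ 0)
    (hw : ∀ t : ZMod 5, t • d ≠ w) (hA : ∀ x ∈ A, x ∈ normalCosets d w) :
    IsNormal A := by
  have : Fact (Nat.Prime 5) := ⟨by norm_num⟩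
  refine ⟨Submodule.span (ZMod 5) {d}, finrank_span_singleton hd, w,
    fun h => (Submodule.mem_span_singleton.1 h).elim hw, fun x hx => ?_⟩
  obtain ⟨t, -, hx⟩ := List.mem_flatMap.1 (hA x hx)
  have htd : t • d ∈ (Submodule.span (ZMod 5) {d} : Set Pt) :=
    Submodule.smul_mem _ t (Submodule.mem_span_singleton_self d)
  simp only [List.mem_cons, List.not_mem_nil, or_false] at hx
  rcases hx with rfl | rfl
  exacts [Or.inl ⟨t • d, htd, rfl⟩, Or.inr ⟨t • d, htd, rfl⟩]

-- For each line `V = F₅ ∙ d` the two maximal normal sets `{±u} + V` and `{±2u} + V`.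
def normalData : List (Pt × Pt) :=
  [(0, 1), (1, 0), (1, 1), (1, 2), (1, 3), (1, 4)].flatMap fun d =>
    let u : Pt := if d = (0, 1) then (1, 0) else (0, 1)
    [(d, u), (d, 2 • u)]

set_option maxRecDepth 10000 in
lemma normalData_valid :
    ∀ dw ∈ normalData, dw.1 ≠ 0 ∧ ∀ t : ZMod 5, t • dw.1 ≠ dw.2 := by
  decide

def normalMasks : List ℕ := normalData.map fun dw => maskOf ((normalCosets dw.1 dw.2).map code)

set_option maxRecDepth 100000 in
lemma search_normalMasks : search codeAdd 6 normalMasks (List.range 25) [] 0 0 = true := by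
  decide +kernel

lemma exists_normalData_of_sumFree {T : Finset Pt} (hT : ∀ a ∈ T, ∀ b ∈ T, a + b ∉ T)
    (h6 : 6 ≤ T.card) : ∃ dw ∈ normalData, ∀ x ∈ T, x ∈ normalCosets dw.1 dw.2 := by
  have hcodes : ∀ a ∈ T.image code, ∀ b ∈ T.image code, codeAdd a b ∉ T.image code := by
    simp only [Finset.mem_image]
    rintro _ ⟨x, hx, rfl⟩ _ ⟨y, hy, rfl⟩ ⟨z, hz, hzxy⟩
    rw [codeAdd_code] at hzxy
    exact hT x hx y hy (code_injective hzxy ▸ hz)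
  have hrange : ∀ n ∈ T.image code, n ∈ [] ∨ n ∈ List.range 25 := by
    simp only [Finset.mem_image, List.mem_range]
    rintro _ ⟨x, -, rfl⟩
    exact Or.inr (code_lt x)
  have hcard : 6 ≤ (T.image code).card := by
    rwa [Finset.card_image_of_injective T code_injective]
  obtain ⟨N, hN, hcover⟩ := search_sound codeAdd 6 normalMasks search_normalMasks
    (isSearchState_nil codeAdd) hcodes (by simp) hrange hcard
  obtain ⟨dw, hdw, rfl⟩ := List.mem_map.1 hN
  refine ⟨dw, hdw, fun x hx => ?_⟩
  obtain ⟨y, hy, hyx⟩ :=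
    List.mem_map.1 ((testBit_maskOf _ _).1 (hcover _ (Finset.mem_image_of_mem code hx)))
  exact code_injective hyx ▸ hy

theorem stmt_4 (A : Set (ZMod 5 × ZMod 5))
    (hsf : ∀ a ∈ A, ∀ b ∈ A, a + b ∉ A)
    (hcard : 6 ≤ A.ncard) :
    ∃ V : Submodule (ZMod 5) (ZMod 5 × ZMod 5), Module.finrank (ZMod 5) V = 1 ∧
      ∃ w : ZMod 5 × ZMod 5, w ∉ V ∧
        A ⊆ ((2 : ZMod 5) • w +ᵥ (V : Set (ZMod 5 × ZMod 5))) ∪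
            ((3 : ZMod 5) • w +ᵥ (V : Set (ZMod 5 × ZMod 5))) := by
  have hfin := A.toFinite
  obtain ⟨⟨d, w⟩, hdw, hcover⟩ := exists_normalData_of_sumFree (T := hfin.toFinset)
    (by simpa only [Set.Finite.mem_toFinset] using hsf)
    (by rwa [← Set.ncard_eq_toFinset_card A hfin])
  obtain ⟨hd, hw⟩ := normalData_valid _ hdw
  exact isNormal_of_forall_mem_normalCosets hd hw fun x hx => hcover x (hfin.mem_toFinset.2 hx)
end

section
/- Let X = {(1,x,y) ∈ F_5^3 : x ∈ {1,2} or (x = 0 and y ∈ {1,2})} ∪ {(2,0,0), (2,0,1)} and Y = X ∪ (−X). Then Y is sum-free, |Y| = 28, and Y is not contained in two cosets of any 2-dimensional subspace of F_5^3. -/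
/-!
Sum-freeness and the count are finite checks. If `Y` lay in two cosets of a plane `V`, a nonzero
functional vanishing on `V` would take at most two values on `Y`; but every nonzero functional on
`𝔽₅³` takes at least three values on `Y`, a finite check over its coefficient vectors.
-/

open Pointwise Finset

local notation "𝔽₅³" => ZMod 5 × ZMod 5 × ZMod 5

theorem LinearMap.apply_eq_of_mem_vadd_of_le_ker {R M N : Type*} [Ring R] [AddCommGroup M]
    [Module R M] [AddCommGroup N] [Module R N] {V : Submodule R M} {f : M →ₗ[R] N}
    (hf : V ≤ LinearMap.ker f) {c x : M} (hx : x ∈ c +ᵥ (V : Set M)) : f x = f c := by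
  obtain ⟨v, hv, rfl⟩ := hx
  simp [LinearMap.mem_ker.mp (hf hv)]

theorem Submodule.exists_card_image_le_two_of_subset_union_vadd {K V : Type*} [Field K]
    [DecidableEq K] [AddCommGroup V] [Module K V] {W : Submodule K V} (hW : W < ⊤)
    {Y : Finset V} {c₁ c₂ : V} (hY : ↑Y ⊆ (c₁ +ᵥ (W : Set V)) ∪ (c₂ +ᵥ (W : Set V))) :
    ∃ f : V →ₗ[K] K, f ≠ 0 ∧ #(Y.image f) ≤ 2 := by
  obtain ⟨f, hf0, hWf⟩ := W.exists_le_ker_of_lt_top hW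
  refine ⟨f, hf0, (card_le_card (t := {f c₁, f c₂}) ?_).trans card_le_two⟩
  intro z hz
  obtain ⟨y, hy, rfl⟩ := mem_image.mp hz
  rcases hY hy with h | h <;> simp [f.apply_eq_of_mem_vadd_of_le_ker hWf h]

theorem LinearMap.apply_prod_prod {R : Type*} [CommSemiring R] (f : R × R × R →ₗ[R] R)
    (v : R × R × R) : f v = f (1, 0, 0) * v.1 + f (0, 1, 0) * v.2.1 + f (0, 0, 1) * v.2.2 := by
  obtain ⟨x, y, z⟩ := v
  have hv : ((x, y, z) : R × R × R) = x • (1, 0, 0) + y • (0, 1, 0) + z • (0, 0, 1) := by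
    simp
  rw [hv, map_add, map_add, map_smul, map_smul, map_smul]
  simp only [Prod.fst_add, Prod.snd_add, Prod.smul_mk, smul_eq_mul]
  ring

theorem fact_prime_five : Fact (Nat.Prime 5) := ⟨by norm_num⟩

def exampleX : Set 𝔽₅³ :=
  {v | v.1 = 1 ∧ (v.2.1 ∈ ({1, 2} : Set (ZMod 5)) ∨
    (v.2.1 = 0 ∧ v.2.2 ∈ ({1, 2} : Set (ZMod 5))))} ∪ {(2, 0, 0), (2, 0, 1)}

-- `exampleX` in the first three lines, `-exampleX` in the last three.
def exampleY : Finset 𝔽₅³ :=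
  {(1, 1, 0), (1, 1, 1), (1, 1, 2), (1, 1, 3), (1, 1, 4),
   (1, 2, 0), (1, 2, 1), (1, 2, 2), (1, 2, 3), (1, 2, 4),
   (1, 0, 1), (1, 0, 2), (2, 0, 0), (2, 0, 1),
   (4, 4, 0), (4, 4, 4), (4, 4, 3), (4, 4, 2), (4, 4, 1),
   (4, 3, 0), (4, 3, 4), (4, 3, 3), (4, 3, 2), (4, 3, 1),
   (4, 0, 4), (4, 0, 3), (3, 0, 0), (3, 0, 4)}

set_option maxRecDepth 4000 in
theorem exampleX_union_neg : exampleX ∪ -exampleX = exampleY := by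
  ext v
  simp only [exampleX, Set.mem_union, Set.mem_ofPred_eq, Set.mem_insert_iff,
    Set.mem_singleton_iff, Set.mem_neg, mem_coe]
  revert v
  decide

set_option maxRecDepth 4000 in
theorem add_notMem_exampleY : ∀ a ∈ exampleY, ∀ b ∈ exampleY, a + b ∉ exampleY := by
  decide

theorem card_exampleY : #exampleY = 28 := rfl

theorem three_le_card_image_exampleY (f : 𝔽₅³ →ₗ[ZMod 5] ZMod 5) (hf : f ≠ 0) : 3 ≤ #(exampleY.image f) := by
  have hcoeff : (f (1, 0, 0), f (0, 1, 0), f (0, 0, 1)) ≠ 0 := by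
    intro h
    simp only [Prod.mk_eq_zero] at h
    exact hf (LinearMap.ext fun v => by simp [f.apply_prod_prod v, h])
  have himage : exampleY.image f =
      exampleY.image fun v => f (1, 0, 0) * v.1 + f (0, 1, 0) * v.2.1 + f (0, 0, 1) * v.2.2 :=
    image_congr fun v _ => f.apply_prod_prod v
  rw [himage]
  generalize f (1, 0, 0) = a, f (0, 1, 0) = b, f (0, 0, 1) = c at hcoeff
  revert a b c
  decide

theorem exampleY_not_subset_union_vadd {W : Submodule (ZMod 5) 𝔽₅³} (hW : W < ⊤) (c₁ c₂ : 𝔽₅³) :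
    ¬ ↑exampleY ⊆ (c₁ +ᵥ (W : Set 𝔽₅³)) ∪ (c₂ +ᵥ (W : Set 𝔽₅³)) := by
  intro h
  have := fact_prime_five
  obtain ⟨f, hf0, hcard⟩ := W.exists_card_image_le_two_of_subset_union_vadd hW h
  have := three_le_card_image_exampleY f hf0
  omega

theorem stmt_7
    (X : Set (ZMod 5 × ZMod 5 × ZMod 5))
    (hX : X = {v | v.1 = 1 ∧ (v.2.1 ∈ ({1, 2} : Set (ZMod 5)) ∨
            (v.2.1 = 0 ∧ v.2.2 ∈ ({1, 2} : Set (ZMod 5))))} ∪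
          {(2, 0, 0), (2, 0, 1)})
    (Y : Set (ZMod 5 × ZMod 5 × ZMod 5)) (hY : Y = X ∪ (-X)) :
    (∀ a ∈ Y, ∀ b ∈ Y, a + b ∉ Y) ∧ Y.ncard = 28 ∧
    ¬ ∃ V : Submodule (ZMod 5) (ZMod 5 × ZMod 5 × ZMod 5),
        Module.finrank (ZMod 5) V = 2 ∧
        ∃ c₁ c₂ : ZMod 5 × ZMod 5 × ZMod 5,
          Y ⊆ (c₁ +ᵥ (V : Set (ZMod 5 × ZMod 5 × ZMod 5))) ∪
              (c₂ +ᵥ (V : Set (ZMod 5 × ZMod 5 × ZMod 5))) := by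
  obtain rfl : Y = exampleY := by rw [hY, hX]; exact exampleX_union_neg
  refine ⟨by simpa using add_notMem_exampleY, by rw [Set.ncard_coe_finset, card_exampleY], ?_⟩
  rintro ⟨V, hV, c₁, c₂, hcover⟩
  have := fact_prime_five
  have hVtop : V < ⊤ := Submodule.lt_top_of_finrank_lt_finrank (by simp [hV])
  exact exampleY_not_subset_union_vadd hVtop c₁ c₂ hcover
end

section
/- Let p ≡ 2 mod 3 be prime, m = (p+1)/3, I = {m, ..., 2m−1} ⊆ F_p, d ∈ {0, ..., m−1}, and J ⊆ {m−d, ..., 2m−1+d} ⊆ F_p with |J| ≥ d+1 such that J is contained in some translate of I. Then F_p \ (I + J) ⊆ {|J| − d, ..., d − |J|} (an interval in F_p around 0). -/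
/-!
Since `p = 3m - 1`, the interval `I` is symmetric, `-I = I`, so `z ∉ I + J` says exactly that `J`
avoids the arc `z + I`. Read `J` through the representatives `{0, …, p - 1}`. The arc `t + I`
containing `J` cannot wrap around `0`: a wrapping arc of length `m` meets the window
`[m - d, 2m - 1 + d]` in at most `2d + 1 - m < |J|` points. So `J` lies in an integer interval of
length `m`, hence on one side of the arc `z + I` within the window, and counting there gives
`|J| ≤ d + min(z, p - z)`.
-/

open Pointwise Set

theorem setOf_exists_natCast_eq_image_Icc {R : Type*} [NatCast R] (lo hi : ℕ) :
    {z : R | ∃ k : ℕ, lo ≤ k ∧ k ≤ hi ∧ z = k} = Nat.cast '' Icc lo hi := by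
  ext z
  simp [eq_comm, and_assoc]

theorem Set.disjoint_vadd_neg_of_notMem_add {G : Type*} [AddCommGroup G] {s t : Set G} {z : G}
    (hz : z ∉ s + t) : Disjoint t (z +ᵥ -s) := by
  rw [Set.disjoint_left]
  rintro _ hj ⟨i, hi, rfl⟩
  exact hz ⟨-i, hi, z +ᵥ i, hj, by simp [vadd_eq_add]⟩

namespace ZMod

variable {p : ℕ} [NeZero p]

theorem mem_natCast_image_Icc_iff {lo hi : ℕ} (hhi : hi < 2 * p) {z : ZMod p} :
    z ∈ (Nat.cast '' Icc lo hi : Set (ZMod p)) ↔ z.val ∈ Icc lo hi ∨ z.val + p ∈ Icc lo hi := by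
  constructor
  · rintro ⟨k, hk, rfl⟩
    have := hk.2
    rw [val_natCast]
    rcases lt_or_ge k p with h | h
    · left
      rwa [Nat.mod_eq_of_lt h]
    · right
      rwa [Nat.mod_eq_sub_mod h, Nat.mod_eq_of_lt (by omega), Nat.sub_add_cancel h]
  · rintro (h | h)
    · exact ⟨z.val, h, natCast_zmod_val z⟩
    · exact ⟨z.val + p, h, by simp⟩

theorem vadd_natCast_image_Icc (t : ZMod p) (lo hi : ℕ) :
    t +ᵥ (Nat.cast '' Icc lo hi : Set (ZMod p)) = Nat.cast '' Icc (t.val + lo) (t.val + hi) := by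
  rw [← image_const_add_Icc, image_image, ← image_vadd, image_image]
  refine image_congr fun k _ => ?_
  simp [vadd_eq_add]

theorem neg_natCast_image_Icc {lo hi : ℕ} (hlo : 0 < lo) (hhi : hi < p) :
    -(Nat.cast '' Icc lo hi : Set (ZMod p)) = Nat.cast '' Icc (p - hi) (p - lo) := by
  ext z
  rw [mem_neg, mem_natCast_image_Icc_iff (by omega), mem_natCast_image_Icc_iff (by omega),
    neg_val]
  have := z.val_lt
  split_ifs with hz
  · simp only [hz, val_zero, mem_Icc]
    omega
  · have := (val_ne_zero z).mpr hz
    simp only [mem_Icc]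
    omega

theorem forall_val_mem_or_of_subset {J : Set (ZMod p)} {lo hi : ℕ} (hhi : hi < 2 * p)
    (hJ : J ⊆ Nat.cast '' Icc lo hi) : ∀ s ∈ val '' J, s ∈ Icc lo hi ∨ s + p ∈ Icc lo hi := by
  rintro _ ⟨j, hj, rfl⟩
  exact (mem_natCast_image_Icc_iff hhi).1 (hJ hj)

theorem forall_val_notMem_of_disjoint {J : Set (ZMod p)} {lo hi : ℕ} (hhi : hi < 2 * p)
    (hJ : Disjoint J (Nat.cast '' Icc lo hi)) :
    ∀ s ∈ val '' J, s ∉ Icc lo hi ∧ s + p ∉ Icc lo hi := by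
  rintro _ ⟨j, hj, rfl⟩
  rw [← not_or, ← mem_natCast_image_Icc_iff hhi]
  exact disjoint_left.1 hJ hj

end ZMod

theorem Set.Nat.exists_subset_Icc_or_ncard_le {S : Set ℕ} {p L R lo k : ℕ} (hSp : S ⊆ Iio p)
    (hLR : S ⊆ Icc L R) (hS : ∀ s ∈ S, s ∈ Icc lo (lo + k) ∨ s + p ∈ Icc lo (lo + k)) :
    (∃ b, S ⊆ Icc b (b + k)) ∨ S.ncard ≤ k + 1 + (R + 1 - L) - p := by
  by_cases hhigh : ∀ s ∈ S, s ∈ Icc lo (lo + k)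
  · exact .inl ⟨lo, hhigh⟩
  by_cases hlow : ∀ s ∈ S, s + p ∈ Icc lo (lo + k)
  · refine .inl ⟨lo - p, fun s hs => ?_⟩
    have := hlow s hs
    simp only [mem_Icc] at *
    omega
  push Not at hhigh hlow
  obtain ⟨s₁, hs₁, hs₁high⟩ := hhigh
  obtain ⟨s₂, hs₂, hs₂low⟩ := hlow
  have h₁ := (hS s₁ hs₁).resolve_left hs₁high
  have h₂ := (hS s₂ hs₂).resolve_right hs₂low
  have := hLR hs₁
  have := hLR hs₂
  have := hSp hs₂
  have hsplit : S ⊆ Icc L (lo + k - p) ∪ Icc lo R := fun s hs => by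
    have := hSp hs
    have := hLR hs
    have := hS s hs
    simp only [mem_Iio, mem_Icc, mem_union] at *
    omega
  right
  have := (ncard_le_ncard hsplit ((finite_Icc _ _).union (finite_Icc _ _))).trans
    (ncard_union_le _ _)
  simp only [ncard_Icc_nat, mem_Iio, mem_Icc] at *
  omega

theorem Set.Nat.exists_disjoint_Icc_of_forall_notMem {S : Set ℕ} {p lo k : ℕ}
    (hS : ∀ s ∈ S, s ∉ Icc lo (lo + k) ∧ s + p ∉ Icc lo (lo + k)) :
    ∃ w, Disjoint S (Icc w (w + k)) ∧ (w = lo ∧ lo < p ∨ w + p = lo) := by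
  rcases lt_or_ge lo p with h | h
  · exact ⟨lo, disjoint_left.2 fun s hs => (hS s hs).1, .inl ⟨rfl, h⟩⟩
  · refine ⟨lo - p, disjoint_left.2 fun s hs hsw => (hS s hs).2 ?_, .inr (by omega)⟩
    simp only [mem_Icc] at *
    omega

theorem Set.Nat.ncard_le_of_disjoint_Icc {S : Set ℕ} {L R b w k : ℕ}
    (hLR : S ⊆ Icc L R) (hb : S ⊆ Icc b (b + k)) (hw : Disjoint S (Icc w (w + k))) :
    S.ncard ≤ w - L ∨ S.ncard ≤ R - (w + k) := by
  rcases le_or_gt b w with h | h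
  · left
    have hsub : S ⊆ Ico L w := fun s hs => by
      have := hLR hs
      have := hb hs
      have := disjoint_left.1 hw hs
      simp only [mem_Icc, mem_Ico] at *
      omega
    simpa using ncard_le_ncard hsub (finite_Ico _ _)
  · right
    have hsub : S ⊆ Ioc (w + k) R := fun s hs => by
      have := hLR hs
      have := hb hs
      have := disjoint_left.1 hw hs
      simp only [mem_Icc, mem_Ioc] at *
      omega
    simpa using ncard_le_ncard hsub (finite_Ioc _ _)

theorem stmt_11_general (p : ℕ) (hp3 : p % 3 = 2)
    (m : ℕ) (hm : m = (p + 1) / 3)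
    (I : Set (ZMod p)) (hI : I = {z | ∃ k : ℕ, m ≤ k ∧ k ≤ 2 * m - 1 ∧ z = (k : ZMod p)})
    (d : ℕ) (hd : d ≤ m - 1)
    (J : Set (ZMod p))
    (hJsub : J ⊆ {z | ∃ k : ℕ, m - d ≤ k ∧ k ≤ 2 * m - 1 + d ∧ z = (k : ZMod p)})
    (hJcard : d + 1 ≤ J.ncard)
    (hJtrans : ∃ t : ZMod p, J ⊆ t +ᵥ I) :
    ∀ z : ZMod p, z ∉ I + J →
      ∃ k : ℕ, J.ncard - d ≤ k ∧ k ≤ p + d - J.ncard ∧ z = (k : ZMod p) := by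
  intro z hz
  obtain ⟨t, ht⟩ := hJtrans
  have hpm : p + 1 = 3 * m := by omega
  have : NeZero p := ⟨by omega⟩
  have hm' : 2 * m - 1 = m + (m - 1) := by omega
  rw [setOf_exists_natCast_eq_image_Icc, hm'] at hI
  rw [setOf_exists_natCast_eq_image_Icc] at hJsub
  have hI_neg : -I = I := by
    rw [hI, ZMod.neg_natCast_image_Icc (by omega) (by omega)]
    congr 2 <;> omega
  have hzI := disjoint_vadd_neg_of_notMem_add hz
  rw [hI_neg, hI, ZMod.vadd_natCast_image_Icc, ← add_assoc] at hzI
  rw [hI, ZMod.vadd_natCast_image_Icc, ← add_assoc] at ht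
  have htp := t.val_lt
  have hzp := z.val_lt
  set S := ZMod.val '' J
  have hSn : S.ncard = J.ncard := ncard_image_of_injective _ (ZMod.val_injective p)
  have hSp : S ⊆ Iio p := image_subset_iff.2 fun j _ => j.val_lt
  have hSL : S ⊆ Icc (m - d) (2 * m - 1 + d) := fun s hs => by
    have := ZMod.forall_val_mem_or_of_subset (by omega) hJsub s hs
    simp only [mem_Icc] at *
    omega
  obtain ⟨b, hb⟩ := (Set.Nat.exists_subset_Icc_or_ncard_le hSp hSL
    (ZMod.forall_val_mem_or_of_subset (by omega) ht)).resolve_right (by omega)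
  have hSm : S.ncard ≤ m := by
    have := ncard_le_ncard hb (finite_Icc _ _)
    rw [ncard_Icc_nat] at this
    omega
  obtain ⟨w, hwS, hw⟩ := Set.Nat.exists_disjoint_Icc_of_forall_notMem
    (ZMod.forall_val_notMem_of_disjoint (by omega) hzI)
  have := Set.Nat.ncard_le_of_disjoint_Icc hSL hb hwS
  exact ⟨z.val, by omega, by omega, (ZMod.natCast_zmod_val z).symm⟩

theorem stmt_11 (p : ℕ) [Fact p.Prime] (hp3 : p % 3 = 2)
    (m : ℕ) (hm : m = (p + 1) / 3)
    (I : Set (ZMod p)) (hI : I = {z | ∃ k : ℕ, m ≤ k ∧ k ≤ 2 * m - 1 ∧ z = (k : ZMod p)})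
    (d : ℕ) (hd : d ≤ m - 1)
    (J : Set (ZMod p))
    (hJsub : J ⊆ {z | ∃ k : ℕ, m - d ≤ k ∧ k ≤ 2 * m - 1 + d ∧ z = (k : ZMod p)})
    (hJcard : d + 1 ≤ J.ncard)
    (hJtrans : ∃ t : ZMod p, J ⊆ t +ᵥ I) :
    ∀ z : ZMod p, z ∉ I + J →
      ∃ k : ℕ, J.ncard - d ≤ k ∧ k ≤ p + d - J.ncard ∧ z = (k : ZMod p) :=
  stmt_11_general p hp3 m hm I hI d hd J hJsub hJcard hJtrans
end

section
/- Let p ≡ 2 mod 3 be prime and A ⊆ F_p with |A| = m = (p+1)/3 and A sum-free. Then A is an arithmetic progression in F_p of length m. -/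
/-!
A sum-free `A ⊆ ZMod p` satisfies `A + A ⊆ Aᶜ`. When `3 * #A = p + 1`, `#Aᶜ = 2 * #A - 1` is the
Cauchy–Davenport lower bound for `#(A + A)`, so `A + A = Aᶜ` is a critical pair and Vosper's
theorem makes `A` an arithmetic progression.

Vosper's theorem is proved by induction. A Dyson transform `(X ∪ (c + Y), Y ∩ (X - c))` keeps the
sumset and criticality. If none shrinks `Y` to a set of size at least `2`, every translate of `Y`
meeting `X` in two points lies in `X`, and the set `S` of these translations satisfies `S + Y = X`
critically, with `#S ≥ 2` once `#Y ≥ 3`. Progression structure then passes back to `(X, Y)`: from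
`Y` to `X` directly for a critical pair, and along a move that keeps the sumset through the duality
`(X + Y)ᶜ + -X = Yᶜ`.
-/

open Finset
open scoped Pointwise

namespace Finset

variable {α : Type*} [DecidableEq α]

def IsArithProg [AddMonoid α] (s : Finset α) (d : α) : Prop :=
  ∃ a, s = (range #s).image fun k ↦ a + k • d

lemma eq_range_card_of_succ_mem {K : Finset ℕ} (hK : ∀ k, k + 1 ∈ K → k ∈ K) :
    K = range #K := by
  have hdown : ∀ j n, n + j ∈ K → n ∈ K := by
    intro j
    induction j with
    | zero => exact fun n hn ↦ hn
    | succ j ih => exact fun n hn ↦ ih n (hK _ (by rwa [← add_assoc] at hn))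
  have hlt : ∀ n ∈ K, n < #K := fun n hn ↦ by
    have : range (n + 1) ⊆ K := fun m hm ↦
      hdown (n - m) m (by rw [Nat.add_sub_cancel' (Nat.lt_succ_iff.1 (mem_range.1 hm))]; exact hn)
    simpa using card_le_card this
  exact eq_of_subset_of_card_le (fun n hn ↦ mem_range.2 (hlt n hn)) (by simp)

lemma pair_zero_add [AddMonoid α] (d : α) (s : Finset α) : {0, d} + s = s ∪ (d +ᵥ s) := by
  rw [insert_eq, union_add, singleton_add, singleton_add, zero_vadd]

lemma IsArithProg.neg [AddCommGroup α] {s : Finset α} {d : α} (h : IsArithProg s d) :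
    IsArithProg (-s) (-d) := by
  obtain ⟨a, ha⟩ := h
  refine ⟨-a, ?_⟩
  rw [card_neg, ← image_neg_eq_neg]
  nth_rw 1 [ha]
  rw [image_image]
  congr 1
  funext k
  simp [add_comm]

lemma isArithProg_pair [AddCommGroup α] {a b : α} (h : a ≠ b) : IsArithProg {a, b} (b - a) :=
  ⟨a, by rw [card_pair h, show range 2 = {0, 1} by decide]; simp⟩

section AddCommGroup

variable [AddCommGroup α] {X Y S : Finset α} {y₁ y₂ : α}

lemma vadd_union_vadd_subset_add (h₁ : y₁ ∈ Y) (h₂ : y₂ ∈ Y) :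
    (y₁ +ᵥ X) ∪ (y₂ +ᵥ X) ⊆ X + Y := by
  rw [add_comm]
  exact union_subset (vadd_finset_subset_add h₁) (vadd_finset_subset_add h₂)

lemma card_vadd_union_vadd_add_card_inter (y₁ y₂ : α) (X : Finset α) :
    #((y₁ +ᵥ X) ∪ (y₂ +ᵥ X)) + #((y₁ +ᵥ X) ∩ (y₂ +ᵥ X)) = #X + #X := by
  rw [card_union_add_card_inter, card_vadd_finset, card_vadd_finset]

lemma card_inter_vadd_le_of_vadd_subset_iff (hS : ∀ c, c ∈ S ↔ c +ᵥ Y ⊆ X)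
    (hsat : ∀ c, ∀ y ∈ Y, ∀ y' ∈ Y, y ≠ y' → c + y ∈ X → c + y' ∈ X → c +ᵥ Y ⊆ X)
    (h₁ : y₁ ∈ Y) (h₂ : y₂ ∈ Y) (hne : y₁ ≠ y₂) :
    #((y₁ +ᵥ X) ∩ (y₂ +ᵥ X)) ≤ #S := by
  rw [← card_vadd_finset (-(y₁ + y₂))]
  refine card_le_card fun c hc ↦ ?_
  obtain ⟨w, hw, rfl⟩ := mem_vadd_finset.1 hc
  obtain ⟨⟨x₁, hx₁, rfl⟩, ⟨x₂, hx₂, hx⟩⟩ :=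
    And.imp mem_vadd_finset.1 mem_vadd_finset.1 (mem_inter.1 hw)
  refine (hS _).2 (hsat _ y₂ h₂ y₁ h₁ hne.symm ?_ ?_)
  · convert hx₁ using 1; simp only [vadd_eq_add]; abel
  · convert hx₂ using 1; simp only [vadd_eq_add] at hx ⊢; rw [← hx]; abel

lemma card_ne_one_of_vadd_subset_iff (hS : ∀ c, c ∈ S ↔ c +ᵥ Y ⊆ X)
    (hsat : ∀ c, ∀ y ∈ Y, ∀ y' ∈ Y, y ≠ y' → c + y ∈ X → c + y' ∈ X → c +ᵥ Y ⊆ X)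
    (hY3 : 3 ≤ #Y) (hcrit : #(X + Y) + 1 = #X + #Y) (hXY : #X = #Y) : #S ≠ 1 := by
  intro hS1
  obtain ⟨c₀, rfl⟩ := card_eq_one.1 hS1
  obtain ⟨y₁, h₁, y₂, h₂, y₃, h₃, h12, h13, h23⟩ := two_lt_card.1 hY3
  have hcount := card_vadd_union_vadd_add_card_inter y₁ y₂ X
  have hinter := card_inter_vadd_le_of_vadd_subset_iff hS hsat h₁ h₂ h12
  rw [card_singleton] at hinter
  -- `X + Y` is covered by two translates of `X`, and `(c₀ + y₃) + y₃` then exhibits a second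
  -- translation `c₀ + y₃ - yᵢ` carrying two points of `Y` into `X`.
  have hcover : X + Y = (y₁ +ᵥ X) ∪ (y₂ +ᵥ X) :=
    (eq_of_subset_of_card_le (vadd_union_vadd_subset_add h₁ h₂) (by omega)).symm
  have hc₀y₃ : c₀ + y₃ ∈ X := (hS c₀).1 (mem_singleton_self c₀) (vadd_mem_vadd_finset h₃)
  have key : ∀ y ∈ Y, y ≠ y₃ → c₀ + y₃ + y₃ ∉ y +ᵥ X := by
    intro y hy hne hz
    obtain ⟨x, hx, hxz⟩ := mem_vadd_finset.1 hz
    have : c₀ + y₃ - y ∈ ({c₀} : Finset α) := (hS _).2 (hsat _ y hy y₃ h₃ hne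
      (by simpa using hc₀y₃) (by convert hx using 1; rw [eq_sub_of_add_eq' hxz]; abel))
    rw [mem_singleton, sub_eq_iff_eq_add, add_right_inj] at this
    exact hne this.symm
  rcases mem_union.1 (hcover ▸ add_mem_add hc₀y₃ h₃) with h | h
  exacts [key y₁ h₁ h13 h, key y₂ h₂ h23 h]

end AddCommGroup

end Finset

namespace ZMod

variable {p : ℕ} [hp : Fact p.Prime] {s t u X Y : Finset (ZMod p)} {d : ZMod p}

lemma card_add_card_le_card_add_add_one (hs : s.Nonempty) (ht : t.Nonempty)
    (h : #(s + t) < p) : #s + #t ≤ #(s + t) + 1 := by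
  have := cauchy_davenport hp.out hs ht
  omega

lemma card_add_card_le_of_add_subset (hs : s.Nonempty) (ht : t.Nonempty) (hst : s + t ⊆ u)
    (hu : #u < p) : #s + #t ≤ #u + 1 := by
  have := card_le_card hst
  have := card_add_card_le_card_add_add_one hs ht (by omega)
  omega

lemma add_eq_of_add_subset (hs : s.Nonempty) (ht : t.Nonempty) (hst : s + t ⊆ u)
    (hu : #u < p) (h : #u + 1 ≤ #s + #t) : s + t = u := by
  have := card_add_card_le_card_add_add_one hs ht ((card_le_card hst).trans_lt hu)
  exact eq_of_subset_of_card_le hst (by omega)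

lemma card_compl_add_card (s : Finset (ZMod p)) : #sᶜ + #s = p := by
  have := card_le_univ s
  rw [card_compl, ZMod.card] at *
  omega

lemma injOn_add_nsmul (a : ZMod p) (hd : d ≠ 0) :
    Set.InjOn (fun k : ℕ ↦ a + k • d) (Set.Iio p) := fun k hk l hl h ↦ by
  have : (k : ZMod p) = l := by
    simpa [nsmul_eq_mul, mul_left_inj' hd] using h
  simpa [ZMod.val_natCast_of_lt hk, ZMod.val_natCast_of_lt hl] using congrArg ZMod.val this

lemma exists_lt_eq_add_nsmul (a z : ZMod p) (hd : d ≠ 0) : ∃ k < p, z = a + k • d :=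
  ⟨((z - a) * d⁻¹).val, ZMod.val_lt _, by
    rw [nsmul_eq_mul, ZMod.natCast_zmod_val, inv_mul_cancel_right₀ hd, add_sub_cancel]⟩

lemma card_image_range_add_nsmul (a : ZMod p) (hd : d ≠ 0) {l : ℕ} (hl : l ≤ p) :
    #((range l).image fun k ↦ a + k • d) = l := by
  rw [card_image_of_injOn, card_range]
  exact (injOn_add_nsmul a hd).mono fun k hk ↦ (mem_range.1 hk).trans_le hl

-- The unique `a ∈ s` with `a - d ∉ s` starts the progression: the steps `k < p` with
-- `a + k • d ∈ s` form an initial segment of `ℕ`.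
theorem isArithProg_of_card_pair_add (hd : d ≠ 0) (h : #({0, d} + s) = #s + 1) :
    IsArithProg s d := by
  have hstart : #(s \ (d +ᵥ s)) = 1 := by
    have := card_sdiff_add_card s (d +ᵥ s)
    rw [card_vadd_finset, ← pair_zero_add, h] at this
    omega
  obtain ⟨a, ha⟩ := card_eq_one.1 hstart
  have hpred : ∀ u ∈ s, u ≠ a → u - d ∈ s := fun u hu hua ↦ by
    by_contra h'
    refine hua (mem_singleton.1 (ha ▸ mem_sdiff.2 ⟨hu, fun hmem ↦ h' ?_⟩))
    obtain ⟨y, hy, rfl⟩ := mem_vadd_finset.1 hmem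
    simpa using hy
  set K := (range p).filter fun k ↦ a + k • d ∈ s
  have hK : K = range #K := eq_range_card_of_succ_mem fun k hk ↦ by
    obtain ⟨hkp, hks⟩ := mem_filter.1 hk
    have hne : a + (k + 1) • d ≠ a := fun h ↦ by
      have := injOn_add_nsmul a hd (mem_range.1 hkp) hp.out.pos (by simpa using h)
      omega
    refine mem_filter.2 ⟨mem_range.2 (by have := mem_range.1 hkp; omega), ?_⟩
    have hsucc : a + (k + 1) • d - d = a + k • d := by rw [succ_nsmul]; abel
    exact hsucc ▸ hpred _ hks hne
  have hsK : s = K.image fun k ↦ a + k • d := by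
    ext z
    constructor
    · intro hz
      obtain ⟨k, hk, rfl⟩ := exists_lt_eq_add_nsmul a z hd
      exact mem_image.2 ⟨k, mem_filter.2 ⟨mem_range.2 hk, hz⟩, rfl⟩
    · intro hz
      obtain ⟨k, hk, rfl⟩ := mem_image.1 hz
      exact (mem_filter.1 hk).2
  have hcard : #s = #K := by
    rw [hsK, card_image_of_injOn ((injOn_add_nsmul a hd).mono fun k hk ↦
      mem_range.1 (mem_filter.1 hk).1)]
  exact ⟨a, by rw [hcard, ← hK, ← hsK]⟩

-- Dropping the last term of `Y` and adding `{0, d}` to `X` stays inside `X + Y`, so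
-- Cauchy–Davenport forces `#({0, d} + X) = #X + 1`.
theorem isArithProg_left_of_isArithProg_right (hd : d ≠ 0)
    (hY : IsArithProg Y d) (hY2 : 2 ≤ #Y) (hcrit : #(X + Y) + 1 = #X + #Y) (hlt : #(X + Y) < p) :
    IsArithProg X d := by
  obtain ⟨b, hb⟩ := hY
  have hX : X.Nonempty := by
    rcases X.eq_empty_or_nonempty with rfl | hX
    · simp at hcrit; omega
    · exact hX
  set Y' := (range (#Y - 1)).image fun k ↦ b + k • d
  have hY' : #Y' = #Y - 1 :=
    card_image_range_add_nsmul b hd (by have := card_compl_add_card Y; omega)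
  have hY's : {0, d} + Y' ⊆ Y := by
    rw [pair_zero_add, union_subset_iff, hb]
    constructor
    · exact image_subset_image (range_subset_range.2 (Nat.sub_le _ _))
    · intro z hz
      obtain ⟨_, hy, rfl⟩ := mem_vadd_finset.1 hz
      obtain ⟨k, hk, rfl⟩ := mem_image.1 hy
      refine mem_image.2 ⟨k + 1, mem_range.2 (by have := mem_range.1 hk; omega), ?_⟩
      rw [succ_nsmul, vadd_eq_add]
      abel
  have hY'ne : Y'.Nonempty := card_pos.1 (by omega)
  have hupper : #({0, d} + X) + #Y' ≤ #(X + Y) + 1 :=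
    card_add_card_le_of_add_subset (insert_nonempty _ _ |>.add hX) hY'ne
      (by rw [add_right_comm, add_comm]; exact add_subset_add_left hY's) hlt
  have hlower := card_add_card_le_card_add_add_one (insert_nonempty 0 {d}) hX (by omega)
  rw [card_pair hd.symm] at hlower
  exact isArithProg_of_card_pair_add hd (by omega)

lemma compl_add_neg_eq (hX : X.Nonempty) (hY : Y.Nonempty)
    (hcrit : #(X + Y) + 1 = #X + #Y) (hlt : #(X + Y) < p) : (X + Y)ᶜ + -X = Yᶜ := by
  have hC := card_compl_add_card (X + Y)
  have hYc := card_compl_add_card Y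
  have := hY.card_pos
  refine add_eq_of_add_subset (card_pos.1 (by omega)) hX.neg ?_ (by omega) (by rw [card_neg]; omega)
  intro z hz
  obtain ⟨c, hc, _, hnu, rfl⟩ := mem_add.1 hz
  obtain ⟨u, hu, rfl⟩ := mem_neg.1 hnu
  rw [mem_compl] at hc ⊢
  exact fun hv ↦ hc (by convert add_mem_add hu hv using 1; abel)

lemma _root_.Finset.IsArithProg.compl_add (hd : d ≠ 0) (hX : IsArithProg X d)
    (hX2 : 2 ≤ #X) (hY : Y.Nonempty) (hcrit : #(X + Y) + 1 = #X + #Y) (hlt : #(X + Y) < p) :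
    IsArithProg (X + Y)ᶜ (-d) := by
  have hdual := compl_add_neg_eq (card_pos.1 (by omega)) hY hcrit hlt
  have hC := card_compl_add_card (X + Y)
  have hYc := card_compl_add_card Y
  have := hY.card_pos
  refine isArithProg_left_of_isArithProg_right (neg_ne_zero.2 hd) hX.neg (by rwa [card_neg])
    ?_ (by rw [hdual]; omega)
  rw [hdual, card_neg]
  omega

lemma _root_.Finset.IsArithProg.of_compl_add (hd : d ≠ 0)
    (hC : IsArithProg (X + Y)ᶜ d) (hC2 : 2 ≤ #(X + Y)ᶜ) (hX : X.Nonempty) (hY : Y.Nonempty)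
    (hcrit : #(X + Y) + 1 = #X + #Y) (hlt : #(X + Y) < p) : IsArithProg X (-d) := by
  have hdual := compl_add_neg_eq hX hY hcrit hlt
  have hCc := card_compl_add_card (X + Y)
  have hYc := card_compl_add_card Y
  have := hY.card_pos
  have hnegX : IsArithProg (-X) d := by
    refine isArithProg_left_of_isArithProg_right hd hC hC2 ?_ (by rw [add_comm (-X), hdual]; omega)
    rw [add_comm (-X), hdual, card_neg]
    omega
  simpa using hnegX.neg

theorem isArithProg_of_add_eq_add {X₁ Y₁ : Finset (ZMod p)} (hd : d ≠ 0)
    (hX₁ : IsArithProg X₁ d) (hX₁2 : 2 ≤ #X₁) (hY₁ : Y₁.Nonempty)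
    (hcrit₁ : #(X₁ + Y₁) + 1 = #X₁ + #Y₁) (hsum : X₁ + Y₁ = X + Y)
    (hX : X.Nonempty) (hY : Y.Nonempty) (hcrit : #(X + Y) + 1 = #X + #Y)
    (hle : #(X + Y) + 2 ≤ p) : IsArithProg X d ∧ IsArithProg Y d := by
  have hC : IsArithProg (X + Y)ᶜ (-d) :=
    hsum ▸ hX₁.compl_add hd hX₁2 hY₁ hcrit₁ (by rw [hsum]; omega)
  have hC2 : 2 ≤ #(X + Y)ᶜ := by have := card_compl_add_card (X + Y); omega
  have hd' : -d ≠ 0 := neg_ne_zero.2 hd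
  refine ⟨by simpa using hC.of_compl_add hd' hC2 hX hY hcrit (by omega), ?_⟩
  rw [add_comm X Y] at hC hC2 hcrit hle
  simpa using hC.of_compl_add hd' hC2 hY hX (by omega) (by omega)

theorem exists_add_eq_of_forall_card_inter_vadd (hY3 : 3 ≤ #Y)
    (hYX : #Y ≤ #X) (hcrit : #(X + Y) + 1 = #X + #Y) (hlt : #(X + Y) < p)
    (hsat : ∀ c : ZMod p, 2 ≤ #(Y ∩ (-c +ᵥ X)) → #Y ≤ #(Y ∩ (-c +ᵥ X))) :
    ∃ S, S + Y = X ∧ #S + #Y = #X + 1 ∧ 2 ≤ #S := by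
  have hsat' : ∀ c, ∀ y ∈ Y, ∀ y' ∈ Y, y ≠ y' → c + y ∈ X → c + y' ∈ X → c +ᵥ Y ⊆ X := by
    intro c y hy y' hy' hne hcy hcy'
    have hsub : {y, y'} ⊆ Y ∩ (-c +ᵥ X) := by
      simp [insert_subset_iff, mem_neg_vadd_finset_iff, hy, hy', hcy, hcy']
    have := hsat c (by simpa [card_pair hne] using card_le_card hsub)
    exact vadd_finset_subset_iff.2 (inter_eq_left.1 (eq_of_subset_of_card_le inter_subset_left this))
  set S := (univ : Finset (ZMod p)).filter fun c ↦ c +ᵥ Y ⊆ X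
  have hS : ∀ c, c ∈ S ↔ c +ᵥ Y ⊆ X := by simp [S]
  have hSY : S + Y ⊆ X := by
    intro z hz
    obtain ⟨c, hc, y, hy, rfl⟩ := mem_add.1 hz
    exact (hS c).1 hc (vadd_mem_vadd_finset hy)
  obtain ⟨y₁, h₁, y₂, h₂, h12⟩ := one_lt_card.1 (by omega : 1 < #Y)
  have hcount := card_vadd_union_vadd_add_card_inter y₁ y₂ X
  have hunion := card_le_card (vadd_union_vadd_subset_add h₁ h₂ (X := X))
  have hinter := card_inter_vadd_le_of_vadd_subset_iff hS hsat' h₁ h₂ h12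
  have hSne : S.Nonempty := card_pos.1 (by omega)
  have hcardS : #S + #Y = #X + 1 := by
    have := card_add_card_le_of_add_subset hSne (card_pos.1 (by omega)) hSY (by omega)
    omega
  refine ⟨S, add_eq_of_add_subset hSne (card_pos.1 (by omega)) hSY (by omega) (by omega),
    hcardS, ?_⟩
  have := card_ne_one_of_vadd_subset_iff hS hsat' hY3
  omega

lemma addDysonETransform_add_eq (c : ZMod p) (hX : X.Nonempty) (hc : (Y ∩ (-c +ᵥ X)).Nonempty)
    (hcrit : #(X + Y) + 1 = #X + #Y) (hlt : #(X + Y) < p) :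
    X ∪ (c +ᵥ Y) + Y ∩ (-c +ᵥ X) = X + Y := by
  have hcard : #(X ∪ (c +ᵥ Y)) + #(Y ∩ (-c +ᵥ X)) = #X + #Y := addDysonETransform.card c (X, Y)
  exact add_eq_of_add_subset (hX.mono subset_union_left) hc (addDysonETransform.subset c (X, Y))
    hlt (by omega)

lemma exists_isArithProg_of_card_eq_two (hY2 : #Y = 2) (hcrit : #(X + Y) + 1 = #X + #Y)
    (hlt : #(X + Y) < p) : ∃ d ≠ 0, IsArithProg X d ∧ IsArithProg Y d := by
  obtain ⟨y₁, y₂, hne, rfl⟩ := card_eq_two.1 hY2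
  have hd : y₂ - y₁ ≠ 0 := sub_ne_zero.2 hne.symm
  exact ⟨_, hd, isArithProg_left_of_isArithProg_right hd (isArithProg_pair hne) hY2.ge hcrit hlt,
    isArithProg_pair hne⟩

theorem vosper (hX : 2 ≤ #X) (hY : 2 ≤ #Y) (hle : #(X + Y) + 2 ≤ p)
    (hcrit : #(X + Y) + 1 = #X + #Y) : ∃ d ≠ 0, IsArithProg X d ∧ IsArithProg Y d := by
  -- Lexicographic induction on `(min #X #Y, #X + #Y)`: a Dyson transform lowers the first
  -- entry, passing to `(S, Y)` keeps it at most `#Y` and lowers the second.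
  induction hn : min #X #Y * p + (#X + #Y) using Nat.strong_induction_on generalizing X Y with
  | _ n ih =>
  wlog hYX : #Y ≤ #X generalizing X Y
  · obtain ⟨d, hd, hYd, hXd⟩ := this hY hX (by rwa [add_comm Y X]) (by rw [add_comm Y X]; omega)
      (by rw [min_comm, add_comm #Y]; exact hn) (by omega)
    exact ⟨d, hd, hXd, hYd⟩
  subst hn
  rw [min_eq_right hYX] at ih
  have hXne : X.Nonempty := card_pos.1 (by omega)
  have hYne : Y.Nonempty := card_pos.1 (by omega)
  rcases hY.eq_or_lt with hY2 | hY3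
  · exact exists_isArithProg_of_card_eq_two hY2.symm hcrit (by omega)
  by_cases hdyson : ∃ c : ZMod p, 2 ≤ #(Y ∩ (-c +ᵥ X)) ∧ #(Y ∩ (-c +ᵥ X)) < #Y
  · obtain ⟨c, hc2, hcY⟩ := hdyson
    have hcard : #(X ∪ (c +ᵥ Y)) + #(Y ∩ (-c +ᵥ X)) = #X + #Y := addDysonETransform.card c (X, Y)
    have hsum := addDysonETransform_add_eq c hXne (card_pos.1 (by omega)) hcrit (by omega)
    have hmeasure : min #(X ∪ (c +ᵥ Y)) #(Y ∩ (-c +ᵥ X)) * p + p ≤ #Y * p := by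
      rw [← Nat.succ_mul]
      exact Nat.mul_le_mul_right p (by omega)
    obtain ⟨d, hd, hXd, -⟩ := ih _ (by omega) (X := X ∪ (c +ᵥ Y)) (Y := Y ∩ (-c +ᵥ X))
      (by omega) hc2 (by rwa [hsum]) (by rw [hsum]; omega) rfl
    exact ⟨d, hd, isArithProg_of_add_eq_add hd hXd (by omega) (card_pos.1 (by omega))
      (by rw [hsum]; omega) hsum hXne hYne hcrit hle⟩
  · push Not at hdyson
    obtain ⟨S, hSY, hcardS, hS2⟩ :=
      exists_add_eq_of_forall_card_inter_vadd hY3 hYX hcrit (by omega) hdyson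
    have hmeasure : min #S #Y * p ≤ #Y * p := Nat.mul_le_mul_right p (min_le_right _ _)
    obtain ⟨d, hd, -, hYd⟩ := ih _ (by omega) (X := S) (Y := Y) hS2 hY (by rw [hSY]; omega)
      (by rw [hSY]; omega) rfl
    exact ⟨d, hd, isArithProg_left_of_isArithProg_right hd hYd hY hcrit (by omega), hYd⟩

end ZMod

theorem stmt_12 (p : ℕ) [Fact p.Prime] (hp3 : p % 3 = 2)
    (A : Set (ZMod p))
    (hsf : ∀ a ∈ A, ∀ b ∈ A, a + b ∉ A)
    (hcard : A.ncard = (p + 1) / 3) :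
    ∃ a r : ZMod p, A = (fun k : ℕ => a + (k : ZMod p) * r) '' {k | k < (p + 1) / 3} := by
  obtain ⟨A, rfl⟩ := A.toFinite.exists_finset_coe
  rw [Set.ncard_coe_finset] at hcard
  obtain ⟨r, a, ha⟩ : ∃ r, IsArithProg A r := by
    have hsub : A + A ⊆ Aᶜ := fun z hz ↦ by
      obtain ⟨a, ha, b, hb, rfl⟩ := mem_add.1 hz
      exact mem_compl.2 (hsf a ha b hb)
    have hAc := ZMod.card_compl_add_card A
    obtain hA1 | hA2 : #A = 1 ∨ 2 ≤ #A := by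
      have := (Fact.out : p.Prime).two_le
      omega
    · obtain ⟨a, rfl⟩ := card_eq_one.1 hA1
      exact ⟨0, a, by simp⟩
    have hA : A.Nonempty := card_pos.1 (by omega)
    have hsum : A + A = Aᶜ := ZMod.add_eq_of_add_subset hA hA hsub (by omega) (by omega)
    obtain ⟨d, -, hd, -⟩ := ZMod.vosper hA2 hA2 (by rw [hsum]; omega) (by rw [hsum]; omega)
    exact ⟨d, hd⟩
  refine ⟨a, r, ?_⟩
  rw [ha, coe_image, coe_range, hcard]
  simp only [nsmul_eq_mul]
  rfl
end

section
/- Let p ≡ 2 mod 3 be prime with m = (p+1)/3 and I = {m, ..., 2m−1} ⊆ F_p. Then I + I = I − I = F_p \ I. -/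
/-!
Work in `ℤ` through the additive map `ℤ → ZMod p`: there `I` is the image of the
interval `[m, 2m - 1]`, so `I + I` and `I - I` are the images of `[2m, 4m - 2]` and
`[1 - m, m - 1]`. Each of these, together with `[m, 2m - 1]`, tiles an interval of `3m - 1 = p`
consecutive integers, i.e. a complete residue system mod `p`; hence its image is exactly the
complement of `I`.
-/

open Pointwise

namespace Set

theorem Icc_sub_Icc {α : Type*} [AddCommGroup α] [LinearOrder α] [IsOrderedAddMonoid α]
    {a b c d : α} (hab : a ≤ b) (hcd : c ≤ d) :
    Icc a b - Icc c d = Icc (a - d) (b - c) := by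
  rw [sub_eq_add_neg, neg_Icc, Icc_add_Icc hab (neg_le_neg hcd), ← sub_eq_add_neg,
    ← sub_eq_add_neg]

theorem BijOn.compl_image_eq_image {α β : Type*} {f : α → β} {s t : Set α}
    (h : BijOn f (s ∪ t) univ) (hst : Disjoint s t) : (f '' s)ᶜ = f '' t := by
  refine IsCompl.compl_eq ⟨disjoint_iff_inter_eq_empty.2 ?_, codisjoint_iff.2 ?_⟩
  · rw [← h.injOn.image_inter subset_union_left subset_union_right, hst.inter_eq, image_empty]
  · exact (image_union f s t).symm.trans h.image_eq

end Set

namespace ZMod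

theorem intCast_bijOn_Ico (n : ℕ) [NeZero n] (a : ℤ) :
    Set.BijOn (Int.cast : ℤ → ZMod n) (Set.Ico a (a + n)) Set.univ := by
  refine ⟨Set.mapsTo_univ _ _, fun x hx y hy hxy ↦ ?_, fun z _ ↦ ?_⟩
  · rw [intCast_eq_intCast_iff, Int.modEq_iff_dvd] at hxy
    have hxy_lt : |y - x| < n :=
      abs_sub_lt_iff.2 ⟨by linarith [hx.1, hy.2], by linarith [hx.2, hy.1]⟩
    linarith [Int.eq_zero_of_abs_lt_dvd hxy hxy_lt]
  · have hlt : ((z - a).val : ℤ) < n := by exact_mod_cast (z - a).val_lt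
    refine ⟨a + ((z - a).val : ℕ), ⟨by omega, by omega⟩, ?_⟩
    push_cast
    rw [natCast_zmod_val, add_sub_cancel]

theorem compl_intCast_image_eq_image {n : ℕ} [NeZero n] {s t : Set ℤ} {a : ℤ}
    (hst : Disjoint s t) (hu : s ∪ t = Set.Ico a (a + n)) :
    ((Int.cast : ℤ → ZMod n) '' s)ᶜ = Int.cast '' t :=
  (hu ▸ intCast_bijOn_Ico n a).compl_image_eq_image hst

end ZMod

theorem stmt_15_general (p : ℕ) (hp3 : p % 3 = 2)
    (m : ℕ) (hm : m = (p + 1) / 3)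
    (I : Set (ZMod p)) (hI : I = {z | ∃ k : ℕ, m ≤ k ∧ k ≤ 2 * m - 1 ∧ z = (k : ZMod p)}) :
    I + I = Set.univ \ I ∧ I - I = Set.univ \ I := by
  have : NeZero p := ⟨by omega⟩
  have hp : (p : ℤ) = 3 * m - 1 := by omega
  have hI_Icc : I = Int.castAddHom (ZMod p) '' Set.Icc (m : ℤ) (2 * m - 1) := by
    subst hI
    ext z
    rw [Int.coe_castAddHom]
    constructor
    · rintro ⟨k, hk₁, hk₂, rfl⟩
      exact ⟨k, ⟨by omega, by omega⟩, Int.cast_natCast k⟩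
    · rintro ⟨x, ⟨hx₁, hx₂⟩, rfl⟩
      lift x to ℕ using by omega
      exact ⟨x, by omega, by omega, Int.cast_natCast x⟩
  have hm₁ : (m : ℤ) ≤ 2 * m - 1 := by omega
  rw [← Set.compl_eq_univ_sdiff, hI_Icc, ← Set.image_add, ← Set.image_sub,
    Set.Icc_add_Icc hm₁ hm₁, Set.Icc_sub_Icc hm₁ hm₁, Int.coe_castAddHom]
  constructor
  · refine (ZMod.compl_intCast_image_eq_image (a := m) ?_ ?_).symm
    · exact Set.disjoint_left.2 fun x h₁ h₂ ↦ by simp only [Set.mem_Icc] at h₁ h₂; omega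
    · ext x; simp only [Set.mem_union, Set.mem_Icc, Set.mem_Ico]; omega
  · refine (ZMod.compl_intCast_image_eq_image (a := 1 - m) ?_ ?_).symm
    · exact Set.disjoint_left.2 fun x h₁ h₂ ↦ by simp only [Set.mem_Icc] at h₁ h₂; omega
    · ext x; simp only [Set.mem_union, Set.mem_Icc, Set.mem_Ico]; omega

theorem stmt_15 (p : ℕ) [Fact p.Prime] (hp3 : p % 3 = 2)
    (m : ℕ) (hm : m = (p + 1) / 3)
    (I : Set (ZMod p)) (hI : I = {z | ∃ k : ℕ, m ≤ k ∧ k ≤ 2 * m - 1 ∧ z = (k : ZMod p)}) :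
    I + I = Set.univ \ I ∧ I - I = Set.univ \ I :=
  stmt_15_general p hp3 m hm I hI
end
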